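/- arXiv:1910.05501 — 6 statements merged into one kernel-verified Lean document; each statement's English description precedes it below -/
import Mathlib

section
/- Let I = (c, c+τ) and let e : I → ℝ be a continuous nondecreasing nonnegative function satisfying e(t) ≤ e₀ + α·e(t)^{1/2} + β·e(t) + γ·e(t)^{3/2} for all t ∈ I, where e₀ = limsup_{t→c⁺} e(t) and α, β, γ > 0. Suppose β < 1/2 and αγ < 1/16. If e₀ = 0, then limsup_{t→(c+τ)⁻} e(t) < 16α². -/
/-!
Write `u = √e`. Since `e₀ = 0`, the hypothesis reads `u ≤ α + β u + γ u²` wherever `u > 0`, and this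
fails at `u = m := 2α/(1-β)` because `4αγ < (1-β)²`. So the continuous function `e` never takes the
value `m²` on the interval. It starts below `m²` (its limsup at `c` is `0`), hence stays below `m²`
by the intermediate value theorem, and `m < 4α` because `1 - β > 1/2`.
-/

open Set Filter Topology

lemma ne_sq_of_le_energy_bound {α β γ x : ℝ} (hα : 0 < α) (hβ : β < 1 / 2)
    (hαγ : α * γ < 1 / 16)
    (hx : x ≤ α * x ^ ((1 : ℝ) / 2) + β * x + γ * x ^ ((3 : ℝ) / 2)) :
    x ≠ (2 * α / (1 - β)) ^ 2 := by
  rintro rfl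
  set m := 2 * α / (1 - β)
  have hm : 0 < m := by unfold m; exact div_pos (by positivity) (by linarith)
  have hmβ : m * (1 - β) = 2 * α := div_mul_cancel₀ _ (by linarith)
  have hpow (p : ℕ) : (m ^ 2) ^ ((p : ℝ) / 2) = m ^ p := by
    rw [← Real.rpow_natCast m 2, ← Real.rpow_mul hm.le, Nat.cast_ofNat,
      mul_div_cancel₀ _ two_ne_zero, Real.rpow_natCast]
  have hroot : (m ^ 2) ^ ((1 : ℝ) / 2) = m := by simpa using hpow 1
  have hcube : (m ^ 2) ^ ((3 : ℝ) / 2) = m ^ 3 := by exact_mod_cast hpow 3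
  rw [hroot, hcube] at hx
  have hγm : α ≤ γ * m ^ 2 := by nlinarith
  have hsq : α * (1 - β) ^ 2 < α * (1 / 4) :=
    calc α * (1 - β) ^ 2 ≤ γ * m ^ 2 * (1 - β) ^ 2 := by gcongr
      _ = γ * (m * (1 - β)) ^ 2 := by ring
      _ = α * (4 * (α * γ)) := by rw [hmβ]; ring
      _ < α * (1 / 4) := by gcongr; linarith
  nlinarith [lt_of_mul_lt_mul_left hsq hα.le]

theorem MonotoneOn.isBoundedUnder_le_nhdsGT {X Y : Type*} [LinearOrder X] [TopologicalSpace X]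
    [OrderTopology X] [DenselyOrdered X] [Preorder Y] {f : X → Y} {a b : X} (hab : a < b)
    (hf : MonotoneOn f (Ioo a b)) : IsBoundedUnder (· ≤ ·) (𝓝[>] a) f := by
  obtain ⟨d, had, hdb⟩ := exists_between hab
  refine ⟨f d, eventually_map.mpr ?_⟩
  filter_upwards [Ioo_mem_nhdsGT had] with t ht
  exact hf ⟨ht.1, ht.2.trans hdb⟩ ⟨had, hdb⟩ ht.2.le

theorem IsPreconnected.forall_lt_of_forall_ne {X Y : Type*} [TopologicalSpace X]
    [LinearOrder Y] [TopologicalSpace Y] [OrderClosedTopology Y] {s : Set X} {f : X → Y} {y : Y}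
    {x₀ : X} (hs : IsPreconnected s) (hf : ContinuousOn f s) (hne : ∀ x ∈ s, f x ≠ y)
    (hx₀ : x₀ ∈ s) (hlt : f x₀ < y) : ∀ x ∈ s, f x < y := by
  intro x hx
  by_contra! hle
  obtain ⟨z, hz, hzy⟩ := hs.intermediate_value hx₀ hx hf ⟨hlt.le, hle⟩
  exact hne z hz hzy

theorem stmt_2_general (c τ α β γ : ℝ) (hτ : 0 < τ) (hα : 0 < α)
    (e : ℝ → ℝ)
    (hcont : ContinuousOn e (Ioo c (c + τ)))
    (hmono : MonotoneOn e (Ioo c (c + τ)))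
    (hnonneg : ∀ t ∈ Ioo c (c + τ), 0 ≤ e t)
    (e₀ : ℝ) (he₀ : e₀ = Filter.limsup e (nhdsWithin c (Ioi c)))
    (hineq : ∀ t ∈ Ioo c (c + τ),
      e t ≤ e₀ + α * (e t) ^ ((1 : ℝ) / 2) + β * e t + γ * (e t) ^ ((3 : ℝ) / 2))
    (hβ2 : β < 1 / 2) (hαγ : α * γ < 1 / 16)
    (hzero : e₀ = 0) :
    Filter.limsup e (nhdsWithin (c + τ) (Iio (c + τ))) < 16 * α ^ 2 := by
  subst hzero
  set m := 2 * α / (1 - β)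
  have hm : 0 < m := div_pos (by positivity) (by linarith)
  have hm4 : m < 4 * α := by rw [div_lt_iff₀ (by linarith)]; nlinarith
  have hcτ : c < c + τ := by linarith
  have hlim : limsup e (𝓝[>] c) < m ^ 2 := by rw [← he₀]; positivity
  obtain ⟨t₀, ht₀, ht₀I⟩ := ((eventually_lt_of_limsup_lt hlim
    (hmono.isBoundedUnder_le_nhdsGT hcτ)).and (Ioo_mem_nhdsGT hcτ)).exists
  have hlt : ∀ t ∈ Ioo c (c + τ), e t < m ^ 2 :=
    isPreconnected_Ioo.forall_lt_of_forall_ne hcont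
      (fun t ht ↦ ne_sq_of_le_energy_bound hα hβ2 hαγ (by simpa using hineq t ht)) ht₀I ht₀
  have hI : Ioo c (c + τ) ∈ 𝓝[<] (c + τ) := Ioo_mem_nhdsLT hcτ
  calc limsup e (𝓝[<] (c + τ)) ≤ m ^ 2 :=
        limsup_le_of_le (isCoboundedUnder_le_of_eventually_le _ (eventually_of_mem hI hnonneg))
          (eventually_of_mem hI fun t ht ↦ (hlt t ht).le)
    _ < 16 * α ^ 2 := by nlinarith

/-- Lemma 3.7 (i): if the initial local energy limit is zero, the energy stays below `16 α²`. -/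
theorem stmt_2 (c τ α β γ : ℝ) (hτ : 0 < τ) (hα : 0 < α) (hβ : 0 < β) (hγ : 0 < γ)
    (e : ℝ → ℝ)
    (hcont : ContinuousOn e (Ioo c (c + τ)))
    (hmono : MonotoneOn e (Ioo c (c + τ)))
    (hnonneg : ∀ t ∈ Ioo c (c + τ), 0 ≤ e t)
    (e₀ : ℝ) (he₀ : e₀ = Filter.limsup e (nhdsWithin c (Ioi c)))
    (hineq : ∀ t ∈ Ioo c (c + τ),
      e t ≤ e₀ + α * (e t) ^ ((1 : ℝ) / 2) + β * e t + γ * (e t) ^ ((3 : ℝ) / 2))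
    (hβ2 : β < 1 / 2) (hαγ : α * γ < 1 / 16)
    (hzero : e₀ = 0) :
    Filter.limsup e (nhdsWithin (c + τ) (Iio (c + τ))) < 16 * α ^ 2 :=
  stmt_2_general c τ α β γ hτ hα e hcont hmono hnonneg e₀ he₀ hineq hβ2 hαγ hzero
end

section
/- Let I = (c, c+τ) and let e : I → ℝ be a continuous nondecreasing nonnegative function satisfying e(t) ≤ e₀ + α·e(t)^{1/2} + β·e(t) + γ·e(t)^{3/2} for all t ∈ I, where e₀ = limsup_{t→c⁺} e(t) and α, β, γ > 0. Suppose β < 1/2 and αγ < 1/64. If 0 < e₀ < 16α², then limsup_{t→(c+τ)⁻} e(t) < 64α². -/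
open Set Filter

/-- Lemma 3.7 (ii). -/
theorem stmt_3 (c τ α β γ : ℝ) (hτ : 0 < τ) (hα : 0 < α) (hβ : 0 < β) (hγ : 0 < γ)
    (e : ℝ → ℝ)
    (hcont : ContinuousOn e (Ioo c (c + τ)))
    (hmono : MonotoneOn e (Ioo c (c + τ)))
    (hnonneg : ∀ t ∈ Ioo c (c + τ), 0 ≤ e t)
    (e₀ : ℝ) (he₀ : e₀ = Filter.limsup e (nhdsWithin c (Ioi c)))
    (hineq : ∀ t ∈ Ioo c (c + τ),
      e t ≤ e₀ + α * (e t) ^ ((1 : ℝ) / 2) + β * e t + γ * (e t) ^ ((3 : ℝ) / 2))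
    (hβ2 : β < 1 / 2) (hαγ : α * γ < 1 / 64)
    (hpos : 0 < e₀) (hlt : e₀ < 16 * α ^ 2) :
    Filter.limsup e (nhdsWithin (c + τ) (Iio (c + τ))) < 64 * α ^ 2 := by
  set M : ℝ := e₀ + 8 * α ^ 2 + 512 * α ^ 2 * (α * γ) + 32 * α ^ 2 with hM
  have hα2 : (0:ℝ) < α ^ 2 := by positivity
  have hMlt : M < 64 * α ^ 2 := by nlinarith
  have he₀M : e₀ < M := by nlinarith [mul_pos hα hγ]
  -- key: no value of e in [M, 64α²]
  have hkey : ∀ t ∈ Ioo c (c + τ), ¬ (M ≤ e t ∧ e t ≤ 64 * α ^ 2) := by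
    rintro t ht ⟨h1, h2⟩
    have hx0 : (0:ℝ) ≤ e t := hnonneg t ht
    have hxpos : 0 < e t := lt_of_lt_of_le (by nlinarith) h1
    have hsq : (e t) ^ ((1:ℝ)/2) = Real.sqrt (e t) := (Real.sqrt_eq_rpow _).symm
    have hsq' : Real.sqrt (e t) ≤ 8 * α := by
      rw [show (8:ℝ) * α = Real.sqrt ((8*α)^2) from (Real.sqrt_sq (by positivity)).symm]
      exact Real.sqrt_le_sqrt (by nlinarith)
    have hsqnn : 0 ≤ Real.sqrt (e t) := Real.sqrt_nonneg _
    have h32 : (e t) ^ ((3:ℝ)/2) = e t * Real.sqrt (e t) := by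
      rw [show (3:ℝ)/2 = 1 + 1/2 by norm_num, Real.rpow_add hxpos, Real.rpow_one,
        Real.sqrt_eq_rpow]
    have hi := hineq t ht
    rw [hsq, h32] at hi
    -- e t ≤ e₀ + α * √(e t) + β * e t + γ * e t * √(e t)
    have hb1 : α * Real.sqrt (e t) ≤ 8 * α ^ 2 := by nlinarith
    have hb2 : β * e t < (1/2) * e t := by nlinarith
    have h4 : e t * Real.sqrt (e t) ≤ 512 * α ^ 3 := by nlinarith
    have hb3 : γ * (e t * Real.sqrt (e t)) ≤ 512 * α ^ 2 * (α * γ) := by nlinarith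
    have : e t < e₀ + 8 * α ^ 2 + (1/2) * e t + 512 * α ^ 2 * (α * γ) := by linarith
    nlinarith
  -- find s₀ near c with e s₀ < M
  have hccτ : c < c + τ := by linarith
  have hmem : Ioo c (c + τ) ∈ nhdsWithin c (Ioi c) := Ioo_mem_nhdsGT hccτ
  have hbdd : IsBoundedUnder (· ≤ ·) (nhdsWithin c (Ioi c)) e := by
    have hmid : c + τ/2 ∈ Ioo c (c + τ) := by constructor <;> linarith
    apply isBoundedUnder_of_eventually_le (a := e (c + τ/2))
    filter_upwards [Ioo_mem_nhdsGT (show c < c + τ/2 by linarith)] with x hx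
    exact hmono ⟨hx.1, by linarith [hx.2]⟩ hmid (le_of_lt hx.2)
  have hev : ∀ᶠ x in nhdsWithin c (Ioi c), e x < M :=
    eventually_lt_of_limsup_lt (he₀ ▸ he₀M) hbdd
  obtain ⟨s₀, hs₀M, hs₀I⟩ : ∃ s₀, e s₀ < M ∧ s₀ ∈ Ioo c (c + τ) :=
    (hev.and (eventually_of_mem hmem (fun x hx => hx))).exists
  -- all t ∈ (s₀, c+τ) satisfy e t < M
  have hall : ∀ t ∈ Ioo s₀ (c + τ), e t ≤ M := by
    intro t ht
    have htI : t ∈ Ioo c (c + τ) := ⟨lt_trans hs₀I.1 ht.1, ht.2⟩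
    by_contra hMt
    push_neg at hMt
    rcases le_or_gt (e t) (64 * α ^ 2) with h | h
    · exact hkey t htI ⟨le_of_lt hMt, h⟩
    · have hsub : Icc s₀ t ⊆ Ioo c (c + τ) := fun x hx =>
        ⟨lt_of_lt_of_le hs₀I.1 hx.1, lt_of_le_of_lt hx.2 ht.2⟩
      have := intermediate_value_Icc (le_of_lt ht.1) (hcont.mono hsub)
      obtain ⟨s, hsmem, hse⟩ := this ⟨le_of_lt (lt_of_lt_of_le hs₀M (le_of_lt hMlt)), le_of_lt h⟩
      exact hkey s (hsub hsmem) ⟨hse ▸ le_of_lt hMlt, le_of_eq hse⟩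
  have hevM : ∀ᶠ x in nhdsWithin (c + τ) (Iio (c + τ)), e x ≤ M := by
    filter_upwards [Ioo_mem_nhdsLT hs₀I.2] with x hx using hall x hx
  have hcob : IsCoboundedUnder (· ≤ ·) (nhdsWithin (c + τ) (Iio (c + τ))) e := by
    apply isCoboundedUnder_le_of_eventually_le
    filter_upwards [Ioo_mem_nhdsLT hccτ] with x hx using hnonneg x hx
  exact lt_of_le_of_lt (limsup_le_of_le hcob hevM) hMlt
end

section
/- Let I = (c, c+τ) and let e : I → ℝ be a continuous nondecreasing nonnegative function satisfying e(t) ≤ e₀ + α·e(t)^{1/2} + β·e(t) + γ·e(t)^{3/2} for all t ∈ I, where e₀ = limsup_{t→c⁺} e(t) and α, β, γ > 0. Suppose β < 1/2 and αγ < 1/16. If 16α² ≤ e₀ ≤ 1/(256γ²), then limsup_{t→(c+τ)⁻} e(t) < 4·e₀. -/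
open Set Filter Topology

set_option maxHeartbeats 1000000 in
/-- Lemma 3.7 (iii). -/
theorem stmt_4 (c τ α β γ : ℝ) (hτ : 0 < τ) (hα : 0 < α) (hβ : 0 < β) (hγ : 0 < γ)
    (e : ℝ → ℝ)
    (hcont : ContinuousOn e (Ioo c (c + τ)))
    (hmono : MonotoneOn e (Ioo c (c + τ)))
    (hnonneg : ∀ t ∈ Ioo c (c + τ), 0 ≤ e t)
    (e₀ : ℝ) (he₀ : e₀ = Filter.limsup e (nhdsWithin c (Ioi c)))
    (hineq : ∀ t ∈ Ioo c (c + τ),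
      e t ≤ e₀ + α * (e t) ^ ((1 : ℝ) / 2) + β * e t + γ * (e t) ^ ((3 : ℝ) / 2))
    (hβ2 : β < 1 / 2) (hαγ : α * γ < 1 / 16)
    (hlow : 16 * α ^ 2 ≤ e₀) (hhigh : e₀ ≤ 1 / (256 * γ ^ 2)) :
    Filter.limsup e (nhdsWithin (c + τ) (Iio (c + τ))) < 4 * e₀ := by
  have he₀pos : 0 < e₀ := lt_of_lt_of_le (by positivity) hlow
  have hne : (Ioo c (c + τ)).Nonempty := nonempty_Ioo.2 (by linarith)
  have hbdd : BddBelow (e '' Ioo c (c + τ)) := by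
    refine ⟨0, ?_⟩
    rintro y ⟨t, ht, rfl⟩
    exact hnonneg t ht
  -- e tends to inf at c⁺, and this inf is e₀
  have htend : Tendsto e (𝓝[>] c) (𝓝 (sInf (e '' Ioo c (c + τ)))) :=
    hmono.tendsto_nhdsWithin_Ioo_right hne hbdd
  have he₀eq : e₀ = sInf (e '' Ioo c (c + τ)) := by
    rw [he₀, htend.limsup_eq]
  -- sqrt facts
  set s0 := Real.sqrt e₀ with hs0def
  have hs0 : s0 ^ 2 = e₀ := Real.sq_sqrt he₀pos.le
  have hs0nn : 0 ≤ s0 := Real.sqrt_nonneg _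
  have hs0pos : 0 < s0 := by nlinarith
  have h4α : 4 * α ≤ s0 := by nlinarith
  have h256 : e₀ * (256 * γ ^ 2) ≤ 1 := (le_div_iff₀ (by positivity)).1 hhigh
  have h16γ : 16 * γ * s0 ≤ 1 := by nlinarith [sq_nonneg (16 * γ * s0 - 1), h256, hs0]
  -- rpow computations at 4 e₀
  have h40 : (0:ℝ) < 4 * e₀ := by linarith
  have hr1 : (4 * e₀) ^ ((1:ℝ)/2) = 2 * s0 := by
    rw [← Real.sqrt_eq_rpow, show (4:ℝ) * e₀ = 2^2 * e₀ by norm_num,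
      Real.sqrt_mul (by positivity), Real.sqrt_sq (by norm_num : (0:ℝ) ≤ 2)]
  have hr3 : (4 * e₀) ^ ((3:ℝ)/2) = 8 * e₀ * s0 := by
    have : ((3:ℝ)/2) = 1 + 1/2 := by norm_num
    rw [this, Real.rpow_add h40, Real.rpow_one, hr1]
    ring
  -- M := value of RHS at 4 e₀
  set M : ℝ := e₀ + α * (4 * e₀) ^ ((1:ℝ)/2) + β * (4 * e₀) + γ * (4 * e₀) ^ ((3:ℝ)/2) with hM
  have hMlt : M < 4 * e₀ := by
    rw [hM, hr1, hr3]
    nlinarith [mul_le_mul_of_nonneg_left h4α hα.le, mul_le_mul_of_nonneg_left h16γ (mul_nonneg hγ.le he₀pos.le)]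
  -- e₀ is a lower bound
  have hlb : ∀ t ∈ Ioo c (c + τ), e₀ ≤ e t := by
    intro t ht
    rw [he₀eq]
    exact csInf_le hbdd ⟨t, ht, rfl⟩
  -- pointwise bound e t ≤ 4 e₀
  have hkey : ∀ t ∈ Ioo c (c + τ), e t ≤ 4 * e₀ := by
    -- first: no point with e t = 4 e₀
    have hno : ∀ s ∈ Ioo c (c + τ), e s ≠ 4 * e₀ := by
      intro s hs hes
      have := hineq s hs
      rw [hes, hr1, hr3] at this
      nlinarith [mul_le_mul_of_nonneg_left h4α hα.le,
        mul_le_mul_of_nonneg_left h16γ (mul_nonneg hγ.le he₀pos.le)]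
    -- a point t₀ with e t₀ < 2 e₀
    obtain ⟨t₀, ht₀lt, ht₀⟩ :
        ∃ t₀, e t₀ < 2 * e₀ ∧ t₀ ∈ Ioo c (c + τ) := by
      have hev : ∀ᶠ t in 𝓝[>] c, e t < 2 * e₀ := by
        refine htend.eventually_lt_const ?_
        rw [← he₀eq]; linarith
      have hev2 : ∀ᶠ t in 𝓝[>] c, t ∈ Ioo c (c + τ) :=
        Ioo_mem_nhdsGT_of_mem ⟨le_refl c, by linarith⟩
      exact (hev.and hev2).exists
    intro t ht
    by_contra hgt
    push_neg at hgt
    have ht₀t : t₀ ≤ t := by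
      by_contra h
      push_neg at h
      have := hmono ht ht₀ h.le
      linarith
    have hsub : Icc t₀ t ⊆ Ioo c (c + τ) := fun x hx => ⟨lt_of_lt_of_le ht₀.1 hx.1, lt_of_le_of_lt hx.2 ht.2⟩
    have hIVT := intermediate_value_Icc ht₀t (hcont.mono hsub)
    have : (4 : ℝ) * e₀ ∈ Icc (e t₀) (e t) := ⟨by linarith, hgt.le⟩
    obtain ⟨s, hsmem, hse⟩ := hIVT this
    exact hno s (hsub hsmem) hse
  -- strengthen to e t ≤ M
  have hkey2 : ∀ t ∈ Ioo c (c + τ), e t ≤ M := by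
    intro t ht
    have h1 := hineq t ht
    have hnn := hnonneg t ht
    have h2 : (e t) ^ ((1:ℝ)/2) ≤ (4 * e₀) ^ ((1:ℝ)/2) :=
      Real.rpow_le_rpow hnn (hkey t ht) (by norm_num)
    have h3 : (e t) ^ ((3:ℝ)/2) ≤ (4 * e₀) ^ ((3:ℝ)/2) :=
      Real.rpow_le_rpow hnn (hkey t ht) (by norm_num)
    rw [hM]
    have := hkey t ht
    nlinarith [mul_le_mul_of_nonneg_left h2 hα.le, mul_le_mul_of_nonneg_left h3 hγ.le]
  -- conclude about limsup at the right endpoint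
  have hev : ∀ᶠ t in 𝓝[<] (c + τ), t ∈ Ioo c (c + τ) :=
    Ioo_mem_nhdsLT_of_mem ⟨by linarith, le_refl _⟩
  have hcob : IsCoboundedUnder (· ≤ ·) (𝓝[<] (c + τ)) e :=
    Filter.isCoboundedUnder_le_of_eventually_le (𝓝[<] (c + τ)) (x := 0)
      (by filter_upwards [hev] with t ht using hnonneg t ht)
  have hle : Filter.limsup e (𝓝[<] (c + τ)) ≤ M := by
    apply Filter.limsup_le_of_le hcob
    filter_upwards [hev] with t ht using hkey2 t ht
  exact lt_of_le_of_lt hle hMlt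
end

section
/- Let ξ, ρ : I → ℝ be functions on an interval I = (c,d) with ρ nondecreasing, and suppose there exist constants A > 0 and θ ∈ (0,1) such that ξ(s') ≤ limsup_{s₁→s⁺} ξ(s₁) + A·|s'−s|^θ for all s < s' in I. If ξ is also lower semi-continuous and the function ẽ(t) := sup_{s ∈ (c,t)} ξ(s) is finite for each t ∈ I, then ẽ is continuous on I. -/
/-!
The running supremum `e t = sup_{(c,t)} ξ` is nondecreasing and, as a supremum over the open sets
`(c,t)`, lower semicontinuous. For upper semicontinuity only jumps to the right can occur. For
`c < s < t ≤ t'`, the values of `ξ` on `(s,t)` are at most `e t`, hence so is `limsup_{s⁺} ξ`,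
and the growth bound gives `ξ ≤ e t + A (t' - s)^θ` on `[t,t')`. Letting `s → t⁻` yields
`e t' ≤ e t + A (t' - t)^θ`, which tends to `e t` as `t' → t⁺`.
-/

open Set Filter Topology

noncomputable def runningSup (ξ : ℝ → ℝ) (c t : ℝ) : ℝ := sSup (ξ '' Ioo c t)

def RightLimsupHolderOn (ξ : ℝ → ℝ) (A θ : ℝ) (I : Set ℝ) : Prop :=
  ∀ s ∈ I, ∀ s' ∈ I, s < s' → ξ s' ≤ limsup ξ (𝓝[>] s) + A * (s' - s) ^ θ

theorem limsup_nhdsGT_le_of_lowerSemicontinuousWithinAt {f : ℝ → ℝ} {u : Set ℝ} {s t M : ℝ}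
    (hf : LowerSemicontinuousWithinAt f u s) (hu : u ∈ 𝓝[>] s) (hst : s < t)
    (hM : ∀ y ∈ Ioo s t, f y ≤ M) :
    limsup f (𝓝[>] s) ≤ M := by
  -- without a lower bound `limsup` in `ℝ` would be the junk value `sInf univ = 0`
  have hbelow : ∀ᶠ y in 𝓝[>] s, f s - 1 ≤ f y :=
    nhdsWithin_le_of_mem hu ((hf _ (sub_one_lt _)).mono fun _ => le_of_lt)
  exact limsup_le_of_le (isCoboundedUnder_le_of_eventually_le _ hbelow)
    (mem_of_superset (Ioo_mem_nhdsGT hst) hM)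

namespace runningSup

variable {ξ : ℝ → ℝ} {c d A θ : ℝ}

theorem le_apply {s t : ℝ} (hbdd : BddAbove (ξ '' Ioo c t)) (hs : s ∈ Ioo c t) :
    ξ s ≤ runningSup ξ c t :=
  le_csSup hbdd (mem_image_of_mem ξ hs)

theorem apply_le {t M : ℝ} (hct : c < t) (h : ∀ s ∈ Ioo c t, ξ s ≤ M) : runningSup ξ c t ≤ M :=
  csSup_le ((nonempty_Ioo.2 hct).image ξ) (forall_mem_image.2 h)

theorem mono {t t' : ℝ} (hct : c < t) (htt' : t ≤ t') (hbdd : BddAbove (ξ '' Ioo c t')) :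
    runningSup ξ c t ≤ runningSup ξ c t' :=
  apply_le hct fun _ hs => le_apply hbdd ⟨hs.1, hs.2.trans_le htt'⟩

theorem lowerSemicontinuousOn (hfin : ∀ t ∈ Ioo c d, BddAbove (ξ '' Ioo c t)) :
    LowerSemicontinuousOn (runningSup ξ c) (Ioo c d) := by
  intro t ht y hy
  obtain ⟨_, ⟨s, hs, rfl⟩, hys⟩ := exists_lt_of_lt_csSup ((nonempty_Ioo.2 ht.1).image ξ) hy
  filter_upwards [mem_nhdsWithin_of_mem_nhds (Ioi_mem_nhds hs.2), self_mem_nhdsWithin]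
    with t' hst' ht'
  exact hys.trans_le (le_apply (hfin t' ht') ⟨hs.1, hst'⟩)

theorem le_add_rpow_of_lt (hgrow : RightLimsupHolderOn ξ A θ (Ioo c d))
    (hlsc : LowerSemicontinuousOn ξ (Ioo c d)) (hfin : ∀ t ∈ Ioo c d, BddAbove (ξ '' Ioo c t))
    (hA : 0 ≤ A) (hθ : 0 ≤ θ) {s t t' : ℝ} (hcs : c < s) (hst : s < t) (htt' : t ≤ t')
    (ht'd : t' < d) :
    runningSup ξ c t' ≤ runningSup ξ c t + A * (t' - s) ^ θ := by
  have hs : s ∈ Ioo c d := ⟨hcs, hst.trans (htt'.trans_lt ht'd)⟩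
  have ht : t ∈ Ioo c d := ⟨hcs.trans hst, htt'.trans_lt ht'd⟩
  have hlimsup : limsup ξ (𝓝[>] s) ≤ runningSup ξ c t :=
    limsup_nhdsGT_le_of_lowerSemicontinuousWithinAt (hlsc s hs)
      (mem_nhdsWithin_of_mem_nhds (isOpen_Ioo.mem_nhds hs)) hst
      fun y hy => le_apply (hfin t ht) ⟨hcs.trans hy.1, hy.2⟩
  refine apply_le (ht.1.trans_le htt') fun s' hs' => ?_
  rcases lt_or_ge s' t with hs't | hts'
  · exact (le_apply (hfin t ht) ⟨hs'.1, hs't⟩).trans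
      (le_add_of_nonneg_right (by have := sub_pos.2 (hst.trans_le htt'); positivity))
  · calc ξ s' ≤ limsup ξ (𝓝[>] s) + A * (s' - s) ^ θ :=
          hgrow s hs s' ⟨hs'.1, hs'.2.trans ht'd⟩ (hst.trans_le hts')
      _ ≤ runningSup ξ c t + A * (t' - s) ^ θ := by
          gcongr
          · linarith
          · exact hs'.2.le

theorem le_add_rpow (hgrow : RightLimsupHolderOn ξ A θ (Ioo c d))
    (hlsc : LowerSemicontinuousOn ξ (Ioo c d)) (hfin : ∀ t ∈ Ioo c d, BddAbove (ξ '' Ioo c t))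
    (hA : 0 ≤ A) (hθ : 0 < θ) {t t' : ℝ} (ht : t ∈ Ioo c d) (htt' : t ≤ t') (ht'd : t' < d) :
    runningSup ξ c t' ≤ runningSup ξ c t + A * (t' - t) ^ θ := by
  have hlim : Tendsto (fun s => runningSup ξ c t + A * (t' - s) ^ θ) (𝓝[<] t)
      (𝓝 (runningSup ξ c t + A * (t' - t) ^ θ)) := by
    refine ContinuousAt.tendsto ?_ |>.mono_left nhdsWithin_le_nhds
    fun_prop (disch := exact hθ.le)
  refine ge_of_tendsto hlim ?_
  filter_upwards [Ioo_mem_nhdsLT ht.1] with s hs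
  exact le_add_rpow_of_lt hgrow hlsc hfin hA hθ.le hs.1 hs.2 htt' ht'd

theorem upperSemicontinuousOn (hgrow : RightLimsupHolderOn ξ A θ (Ioo c d))
    (hlsc : LowerSemicontinuousOn ξ (Ioo c d)) (hfin : ∀ t ∈ Ioo c d, BddAbove (ξ '' Ioo c t))
    (hA : 0 ≤ A) (hθ : 0 < θ) :
    UpperSemicontinuousOn (runningSup ξ c) (Ioo c d) := by
  intro t ht y hy
  have hlim : Tendsto (fun t' => runningSup ξ c t + A * |t' - t| ^ θ) (𝓝 t)
      (𝓝 (runningSup ξ c t)) := by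
    have hcont : Continuous fun t' => runningSup ξ c t + A * |t' - t| ^ θ := by
      fun_prop (disch := exact hθ.le)
    simpa [Real.zero_rpow hθ.ne'] using hcont.tendsto t
  filter_upwards [nhdsWithin_le_nhds (hlim.eventually (gt_mem_nhds hy)), self_mem_nhdsWithin]
    with t' hlt ht'
  refine lt_of_le_of_lt ?_ hlt
  rcases le_total t' t with ht't | htt'
  · exact (mono ht'.1 ht't (hfin t ht)).trans (le_add_of_nonneg_right (by positivity))
  · simpa [abs_of_nonneg (sub_nonneg.2 htt')] using le_add_rpow hgrow hlsc hfin hA hθ ht htt' ht'.2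

end runningSup

theorem stmt_6_general (c d : ℝ)
    (ξ : ℝ → ℝ)
    (A θ : ℝ) (hA : 0 < A) (hθ : θ ∈ Ioo (0 : ℝ) 1)
    (hgrow : ∀ s ∈ Ioo c d, ∀ s' ∈ Ioo c d, s < s' →
      ξ s' ≤ Filter.limsup ξ (nhdsWithin s (Ioi s)) + A * (s' - s) ^ θ)
    (hlsc : LowerSemicontinuousOn ξ (Ioo c d))
    (hfin : ∀ t ∈ Ioo c d, BddAbove (ξ '' Ioo c t)) :
    ContinuousOn (fun t => sSup (ξ '' Ioo c t)) (Ioo c d) :=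
  continuousOn_iff_lower_upperSemicontinuousOn.2
    ⟨runningSup.lowerSemicontinuousOn hfin,
      runningSup.upperSemicontinuousOn hgrow hlsc hfin hA.le hθ.1⟩

/-- Lemma 3.4 (ii) abstracted: continuity of the running supremum of a lower
semicontinuous function with a one-sided Hölder-type growth bound. -/
theorem stmt_6 (c d : ℝ) (hcd : c < d)
    (ξ ρ : ℝ → ℝ) (hρ : MonotoneOn ρ (Ioo c d))
    (A θ : ℝ) (hA : 0 < A) (hθ : θ ∈ Ioo (0 : ℝ) 1)
    (hgrow : ∀ s ∈ Ioo c d, ∀ s' ∈ Ioo c d, s < s' →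
      ξ s' ≤ Filter.limsup ξ (nhdsWithin s (Ioi s)) + A * (s' - s) ^ θ)
    (hlsc : LowerSemicontinuousOn ξ (Ioo c d))
    (hfin : ∀ t ∈ Ioo c d, BddAbove (ξ '' Ioo c t)) :
    ContinuousOn (fun t => sSup (ξ '' Ioo c t)) (Ioo c d) :=
  stmt_6_general c d ξ A θ hA hθ hgrow hlsc hfin
end

section
/- Let α, β, γ > 0 with β < 1/2 and αγ < 1/16, and let x ≥ 0 satisfy x ≤ α·x^{1/2} + β·x + γ·x^{3/2}. If moreover x ≤ 1/(16γ)², then x < 16α². -/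
/-- Algebraic core of the local energy lemma: a nonnegative real dominated by
`α x^{1/2} + β x + γ x^{3/2}` with an a priori bound `x ≤ (1/(16γ))²` satisfies `x < 16α²`. -/
theorem stmt_12 (α β γ x : ℝ) (hα : 0 < α) (hβ : 0 < β) (hγ : 0 < γ)
    (hβ2 : β < 1 / 2) (hαγ : α * γ < 1 / 16)
    (hx : 0 ≤ x)
    (hineq : x ≤ α * x ^ ((1 : ℝ) / 2) + β * x + γ * x ^ ((3 : ℝ) / 2))
    (hbound : x ≤ (1 / (16 * γ)) ^ 2) :
    x < 16 * α ^ 2 := by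
  set s : ℝ := x ^ ((1 : ℝ) / 2) with hs
  have hs0 : 0 ≤ s := Real.rpow_nonneg hx _
  have hs2 : s ^ 2 = x := by
    rw [hs, ← Real.rpow_natCast (x ^ ((1:ℝ)/2)) 2, ← Real.rpow_mul hx]
    norm_num
  have hs3 : s ^ 3 = x ^ ((3 : ℝ) / 2) := by
    rw [hs, ← Real.rpow_natCast (x ^ ((1:ℝ)/2)) 3, ← Real.rpow_mul hx]
    norm_num
  have hineq' : s ^ 2 ≤ α * s + β * s ^ 2 + γ * s ^ 3 := by
    rw [hs2, hs3]; exact hineq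
  have hγinv : 0 < 1 / (16 * γ) := by positivity
  have hsb : s ≤ 1 / (16 * γ) := by
    by_contra h
    push_neg at h
    nlinarith [hs2, hbound]
  have hγs : γ * s ≤ 1 / 16 := by
    calc γ * s ≤ γ * (1 / (16 * γ)) := mul_le_mul_of_nonneg_left hsb hγ.le
      _ = 1 / 16 := by field_simp
  rcases eq_or_lt_of_le hs0 with h0 | h0
  · have : x = 0 := by rw [← hs2, ← h0]; ring
    rw [this]; positivity
  · have key : s < 4 * α := by
      nlinarith [mul_le_mul_of_nonneg_right hγs (sq_nonneg s), sq_nonneg s]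
    calc x = s ^ 2 := hs2.symm
      _ < 16 * α ^ 2 := by nlinarith
end

section
/- Let a < b, and let ξ : (a,b) → ℝ be a function satisfying: (i) ξ is lower semi-continuous; (ii) there are constants A > 0 and θ ∈ (0,1) with ξ(s') ≤ limsup_{σ→s⁺} ξ(σ) + A(s'−s)^θ for all a < s < s' < b; (iii) there exists L = lim_{s→a⁺} ξ(s) (the right limit at a exists). Then the extended running supremum e(t) = max{L, sup_{s∈(a,t)} ξ(s)} satisfies e(a⁺) = L and L ≤ e(t) ≤ L + A(t−a)^θ for all t ∈ (a,b); in particular e extends continuously to [a,b) with e(a) = L. -/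
/-!
Fix `s' ∈ (a, b)`. For `s` slightly to the right of `a`, every point just to the right of `s`
is still close to `a`, so `limsup_{σ → s⁺} ξ σ ≤ L + ε`; lower semicontinuity bounds `ξ` below
near `s`, which keeps this `limsup` from being the junk value of an `sInf` of a set unbounded
below. The growth condition from such an `s` and monotonicity of `x ↦ x ^ θ` then give
`ξ s' ≤ L + A (s' - a) ^ θ`. Taking suprema bounds `e` between `L` and `L + A (t - a) ^ θ`, and
the limit follows by squeezing.
-/

open Set Filter Topology

theorem LowerSemicontinuousWithinAt.isBoundedUnder_ge {α β : Type*} [TopologicalSpace α]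
    [LinearOrder β] [NoMinOrder β] {f : α → β} {s : Set α} {x : α}
    (hf : LowerSemicontinuousWithinAt f s x) : IsBoundedUnder (· ≥ ·) (𝓝[s] x) f :=
  let ⟨y, hy⟩ := exists_lt (f x)
  ⟨y, (hf y hy).mono fun _ h ↦ h.le⟩

theorem LowerSemicontinuousOn.isCoboundedUnder_le_nhdsGT {f : ℝ → ℝ} {a b s : ℝ}
    (hf : LowerSemicontinuousOn f (Ioo a b)) (hs : s ∈ Ioo a b) :
    IsCoboundedUnder (· ≤ ·) (𝓝[>] s) f := by
  have hbdd := LowerSemicontinuousWithinAt.isBoundedUnder_ge (hf s hs)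
  rw [isOpen_Ioo.nhdsWithin_eq hs] at hbdd
  exact (hbdd.mono nhdsWithin_le_nhds).isCoboundedUnder_le

theorem eventually_limsup_nhdsGT_le {f : ℝ → ℝ} {a L c : ℝ} (hL : Tendsto f (𝓝[>] a) (𝓝 L))
    (hLc : L < c) (hcob : ∀ᶠ s in 𝓝[>] a, IsCoboundedUnder (· ≤ ·) (𝓝[>] s) f) :
    ∀ᶠ s in 𝓝[>] a, limsup f (𝓝[>] s) ≤ c := by
  have hlt : ∀ᶠ s in 𝓝[>] a, ∀ᶠ σ in 𝓝[Ioi a] s, f σ < c :=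
    eventually_eventually_nhdsWithin.mpr (hL.eventually_lt_const hLc)
  filter_upwards [hlt, hcob, self_mem_nhdsWithin] with s hs hs_cob has
  refine limsup_le_of_le hs_cob ?_
  filter_upwards [nhdsWithin_mono s (Ioi_subset_Ioi (le_of_lt has)) hs] with σ hσ
    using hσ.le

theorem le_add_mul_rpow_of_le_limsup_add {f : ℝ → ℝ} {a s' L A θ : ℝ} (has' : a < s')
    (hL : Tendsto f (𝓝[>] a) (𝓝 L)) (hA : 0 ≤ A) (hθ : 0 ≤ θ)
    (hcob : ∀ᶠ s in 𝓝[>] a, IsCoboundedUnder (· ≤ ·) (𝓝[>] s) f)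
    (hgrow : ∀ s ∈ Ioo a s', f s' ≤ limsup f (𝓝[>] s) + A * (s' - s) ^ θ) :
    f s' ≤ L + A * (s' - a) ^ θ := by
  refine le_of_forall_pos_le_add fun ε hε ↦ ?_
  obtain ⟨s, hs_limsup, hs⟩ := ((eventually_limsup_nhdsGT_le hL (lt_add_of_pos_right L hε)
    hcob).and (Ioo_mem_nhdsGT has')).exists
  have hpow : (s' - s) ^ θ ≤ (s' - a) ^ θ :=
    Real.rpow_le_rpow (by linarith [hs.2]) (by linarith [hs.1]) hθ
  calc f s' ≤ limsup f (𝓝[>] s) + A * (s' - s) ^ θ := hgrow s hs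
    _ ≤ L + ε + A * (s' - a) ^ θ := add_le_add hs_limsup (mul_le_mul_of_nonneg_left hpow hA)
    _ = L + A * (s' - a) ^ θ + ε := by ring

theorem tendsto_add_mul_sub_rpow_nhdsGT (L A a : ℝ) {θ : ℝ} (hθ : 0 < θ) :
    Tendsto (fun t ↦ L + A * (t - a) ^ θ) (𝓝[>] a) (𝓝 L) := by
  have hcont : ContinuousAt (fun t ↦ L + A * (t - a) ^ θ) a :=
    continuousAt_const.add <| continuousAt_const.mul <|
      (Real.continuousAt_rpow_const _ _ (Or.inr hθ.le)).comp
        (continuousAt_id.sub continuousAt_const)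
  simpa [Real.zero_rpow hθ.ne'] using hcont.tendsto.mono_left nhdsWithin_le_nhds

/-- Lemma 3.4 (iii) abstracted: if the localized energy has a right limit `L` at the
initial time, the extended running supremum tends to `L` and is Hölder-close to `L`. -/
theorem stmt_18 (a b : ℝ) (hab : a < b)
    (ξ : ℝ → ℝ)
    (hlsc : LowerSemicontinuousOn ξ (Ioo a b))
    (A θ : ℝ) (hA : 0 < A) (hθ : θ ∈ Ioo (0 : ℝ) 1)
    (hgrow : ∀ s, a < s → ∀ s', s < s' → s' < b →
      ξ s' ≤ Filter.limsup ξ (nhdsWithin s (Ioi s)) + A * (s' - s) ^ θ)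
    (L : ℝ) (hL : Filter.Tendsto ξ (nhdsWithin a (Ioi a)) (nhds L))
    (e : ℝ → ℝ) (he : ∀ t ∈ Ioo a b, e t = max L (sSup (ξ '' Ioo a t))) :
    Filter.Tendsto e (nhdsWithin a (Ioi a)) (nhds L) ∧
    ∀ t ∈ Ioo a b, L ≤ e t ∧ e t ≤ L + A * (t - a) ^ θ := by
  have hcob : ∀ᶠ s in 𝓝[>] a, IsCoboundedUnder (· ≤ ·) (𝓝[>] s) ξ := by
    filter_upwards [Ioo_mem_nhdsGT hab] with s hs using hlsc.isCoboundedUnder_le_nhdsGT hs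
  have hξ : ∀ s' ∈ Ioo a b, ξ s' ≤ L + A * (s' - a) ^ θ := fun s' hs' ↦
    le_add_mul_rpow_of_le_limsup_add hs'.1 hL hA.le hθ.1.le hcob
      fun s hs ↦ hgrow s hs.1 s' hs.2 hs'.2
  have hbounds : ∀ t ∈ Ioo a b, L ≤ e t ∧ e t ≤ L + A * (t - a) ^ θ := by
    intro t ht
    have hsup : sSup (ξ '' Ioo a t) ≤ L + A * (t - a) ^ θ := by
      refine csSup_le ((nonempty_Ioo.mpr ht.1).image ξ) ?_
      rintro _ ⟨s', hs', rfl⟩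
      have hpow : (s' - a) ^ θ ≤ (t - a) ^ θ :=
        Real.rpow_le_rpow (by linarith [hs'.1]) (by linarith [hs'.2]) hθ.1.le
      linarith [hξ s' ⟨hs'.1, hs'.2.trans ht.2⟩, mul_le_mul_of_nonneg_left hpow hA.le]
    have hnonneg : 0 ≤ A * (t - a) ^ θ := by
      have := Real.rpow_nonneg (sub_nonneg.mpr ht.1.le) θ
      positivity
    rw [he t ht]
    exact ⟨le_max_left _ _, max_le (by linarith) hsup⟩
  refine ⟨tendsto_of_tendsto_of_tendsto_of_le_of_le' tendsto_const_nhds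
    (tendsto_add_mul_sub_rpow_nhdsGT L A a hθ.1) ?_ ?_, hbounds⟩
  · filter_upwards [Ioo_mem_nhdsGT hab] with t ht using (hbounds t ht).1
  · filter_upwards [Ioo_mem_nhdsGT hab] with t ht using (hbounds t ht).2
end
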